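/- Fix reals L < M < H. There is no bribeproof mechanism (A,p) on the three-values domain Θ = {L,M,H}^4 for the path auction on the diamond network; that is, for every algorithm A : {L,M,H}^4 → {(1,1,0,0),(0,0,1,1)} that selects a minimum-cost path and every payment function p : {L,M,H}^4 → ℝ^4, the mechanism (A,p) is not bribeproof. -/
import Mathlib


open Function Finset

noncomputable section

/-- Utility of agent `i` with true per-unit cost `t` when the reported vector is `θhat`. -/
def utility {n : ℕ} (A p : (Fin n → ℝ) → Fin n → ℝ) (θhat : Fin n → ℝ) (i : Fin n) (t : ℝ) : ℝ :=
  p θhat i - A θhat i * t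

/-- `θ` belongs to the product domain `Θ = Θ_1 × ⋯ × Θ_n`. -/
def InDomain {n : ℕ} (Θ : Fin n → Set ℝ) (θ : Fin n → ℝ) : Prop := ∀ k, θ k ∈ Θ k

/-- Bribeproofness: no agent `j` can bribe an agent `i` into a unilateral misreport
so that their joint utility improves (taking `i = j` gives strategyproofness). -/
def Bribeproof {n : ℕ} (Θ : Fin n → Set ℝ) (A p : (Fin n → ℝ) → Fin n → ℝ) : Prop :=
  ∀ θ, InDomain Θ θ → ∀ i j : Fin n, ∀ x ∈ Θ i,
    utility A p θ i (θ i) + utility A p θ j (θ j) ≥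
      utility A p (Function.update θ i x) i (θ i) +
        utility A p (Function.update θ i x) j (θ j)

/-- Strong bribeproofness: additionally no two distinct agents can jointly misreport
so that their joint utility improves. -/
def StronglyBribeproof {n : ℕ} (Θ : Fin n → Set ℝ) (A p : (Fin n → ℝ) → Fin n → ℝ) : Prop :=
  Bribeproof Θ A p ∧
    ∀ θ, InDomain Θ θ → ∀ i j : Fin n, i ≠ j → ∀ x ∈ Θ i, ∀ y ∈ Θ j,
      utility A p θ i (θ i) + utility A p θ j (θ j) ≥
        utility A p (Function.update (Function.update θ i x) j y) i (θ i) +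
          utility A p (Function.update (Function.update θ i x) j y) j (θ j)

/-- Collusion-proofness: no coalition `C` can improve its total utility by a joint
misreport of the types of (some of) its members. -/
def CollusionProof {n : ℕ} (Θ : Fin n → Set ℝ) (A p : (Fin n → ℝ) → Fin n → ℝ) : Prop :=
  ∀ θ, InDomain Θ θ → ∀ C : Finset (Fin n), ∀ θhat, InDomain Θ θhat →
    (∀ k, k ∉ C → θhat k = θ k) →
    ∑ i ∈ C, utility A p θ i (θ i) ≥ ∑ i ∈ C, utility A p θhat i (θ i)

/-- `Δ^i_k(θ_{-i}) = A_k(L, θ_{-i}) - A_k(H, θ_{-i})`. -/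
-- helpers
private lemma vec0 (a b c d : ℝ) : (![a,b,c,d] : Fin 4 → ℝ) 0 = a := rfl
private lemma vec1 (a b c d : ℝ) : (![a,b,c,d] : Fin 4 → ℝ) 1 = b := rfl
private lemma vec2 (a b c d : ℝ) : (![a,b,c,d] : Fin 4 → ℝ) 2 = c := rfl
private lemma vec3 (a b c d : ℝ) : (![a,b,c,d] : Fin 4 → ℝ) 3 = d := rfl

private lemma upd0 (a b c d x : ℝ) :
    Function.update ![a,b,c,d] (0 : Fin 4) x = ![x,b,c,d] := by
  funext k; fin_cases k <;> simp [Function.update]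
private lemma upd1 (a b c d x : ℝ) :
    Function.update ![a,b,c,d] (1 : Fin 4) x = ![a,x,c,d] := by
  funext k; fin_cases k <;> simp [Function.update]
private lemma upd2 (a b c d x : ℝ) :
    Function.update ![a,b,c,d] (2 : Fin 4) x = ![a,b,x,d] := by
  funext k; fin_cases k <;> simp [Function.update]
private lemma upd3 (a b c d x : ℝ) :
    Function.update ![a,b,c,d] (3 : Fin 4) x = ![a,b,c,x] := by
  funext k; fin_cases k <;> simp [Function.update]

private lemma payEq {Θ : Fin 4 → Set ℝ} {A p : (Fin 4 → ℝ) → Fin 4 → ℝ}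
    (hbp : Bribeproof Θ A p) {θ θ' : Fin 4 → ℝ} (hθ : InDomain Θ θ) {i : Fin 4} {x : ℝ}
    (hx : x ∈ Θ i) (hupd : Function.update θ i x = θ') (hA : A θ' = A θ) :
    ∀ k, p θ' k = p θ k := by
  have hθ' : InDomain Θ θ' := by
    intro m
    rw [← hupd]
    by_cases hm : m = i
    · subst hm; simpa using hx
    · rw [Function.update_of_ne hm]; exact hθ m
  have hback : Function.update θ' i (θ i) = θ := by
    rw [← hupd, Function.update_idem, Function.update_eq_self]
  have pair : ∀ m : Fin 4, p θ' i + p θ' m = p θ i + p θ m := by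
    intro m
    have h1 := hbp θ hθ i m x hx
    have h2 := hbp θ' hθ' i m (θ i) (hθ i)
    rw [hupd] at h1
    rw [hback] at h2
    simp only [utility, hA] at h1 h2
    linarith
  intro k
  have pi := pair i
  have pk := pair k
  linarith


private lemma key (L M H : ℝ) (hLM : L < M) (hMH : M < H)
    (A p : (Fin 4 → ℝ) → Fin 4 → ℝ)
    (hfeas : ∀ θ, InDomain (fun _ => ({L, M, H} : Set ℝ)) θ →
      A θ = (![1, 1, 0, 0] : Fin 4 → ℝ) ∨ A θ = (![0, 0, 1, 1] : Fin 4 → ℝ))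
    (hupper : ∀ θ, InDomain (fun _ => ({L, M, H} : Set ℝ)) θ →
      θ 0 + θ 1 < θ 2 + θ 3 → A θ = (![1, 1, 0, 0] : Fin 4 → ℝ))
    (hlower : ∀ θ, InDomain (fun _ => ({L, M, H} : Set ℝ)) θ →
      θ 2 + θ 3 < θ 0 + θ 1 → A θ = (![0, 0, 1, 1] : Fin 4 → ℝ))
    (hbp : Bribeproof (fun _ => ({L, M, H} : Set ℝ)) A p)
    (hU : A ![M, M, M, M] = (![1, 1, 0, 0] : Fin 4 → ℝ)) : False := by
  have memL : L ∈ ({L, M, H} : Set ℝ) := by simp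
  have memM : M ∈ ({L, M, H} : Set ℝ) := by simp
  have memH : H ∈ ({L, M, H} : Set ℝ) := by simp
  have dom4 : ∀ {a b c d : ℝ}, a ∈ ({L, M, H} : Set ℝ) → b ∈ ({L, M, H} : Set ℝ) →
      c ∈ ({L, M, H} : Set ℝ) → d ∈ ({L, M, H} : Set ℝ) →
      InDomain (fun _ => ({L, M, H} : Set ℝ)) ![a, b, c, d] := by
    intro a b c d ha hb hc hd k
    fin_cases k
    · exact ha
    · exact hb
    · exact hc
    · exact hd
  -- forced allocations
  have hq2 : A ![M,M,L,M] = ![0,0,1,1] :=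
    hlower _ (dom4 memM memM memL memM) (by show L + M < M + M; linarith)
  have hq1 : A ![M,H,M,M] = ![0,0,1,1] :=
    hlower _ (dom4 memM memH memM memM) (by show M + M < M + H; linarith)
  have hc1 : A ![M,H,L,M] = ![0,0,1,1] :=
    hlower _ (dom4 memM memH memL memM) (by show L + M < M + H; linarith)
  have hzh : A ![M,L,H,L] = ![1,1,0,0] :=
    hupper _ (dom4 memM memL memH memL) (by show M + L < H + L; linarith)
  have hm1 : A ![M,L,H,M] = ![1,1,0,0] :=
    hupper _ (dom4 memM memL memH memM) (by show M + L < H + M; linarith)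
  have hm2 : A ![M,L,M,M] = ![1,1,0,0] :=
    hupper _ (dom4 memM memL memM memM) (by show M + L < M + M; linarith)
  have hq3 : A ![M,M,M,L] = ![0,0,1,1] :=
    hlower _ (dom4 memM memM memM memL) (by show M + L < M + M; linarith)
  have hq4 : A ![M,M,L,L] = ![0,0,1,1] :=
    hlower _ (dom4 memM memM memL memL) (by show L + L < M + M; linarith)
  have hzh' : A ![H,L,M,L] = ![0,0,1,1] :=
    hlower _ (dom4 memH memL memM memL) (by show M + L < H + L; linarith)
  have hc2 : A ![H,M,M,L] = ![0,0,1,1] :=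
    hlower _ (dom4 memH memM memM memL) (by show M + L < H + M; linarith)
  have hq0 : A ![H,M,M,M] = ![0,0,1,1] :=
    hlower _ (dom4 memH memM memM memM) (by show M + M < H + M; linarith)
  have hc3 : A ![H,M,L,M] = ![0,0,1,1] :=
    hlower _ (dom4 memH memM memL memM) (by show L + M < H + M; linarith)
  have hP5 : A ![L,M,M,M] = ![1,1,0,0] :=
    hupper _ (dom4 memL memM memM memM) (by show L + M < M + M; linarith)
  have hu3 : A ![L,M,L,H] = ![1,1,0,0] :=
    hupper _ (dom4 memL memM memL memH) (by show L + M < L + H; linarith)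
  have hc4 : A ![L,M,M,H] = ![1,1,0,0] :=
    hupper _ (dom4 memL memM memM memH) (by show L + M < M + H; linarith)
  -- payment equalities (common)
  have eqc1 : ∀ k, p ![M,H,L,M] k = p ![M,H,M,M] k :=
    payEq hbp (dom4 memM memH memM memM) memL (upd2 M H M M L) (hc1.trans hq1.symm)
  have eqc2 : ∀ k, p ![M,M,L,M] k = p ![M,H,L,M] k :=
    payEq hbp (dom4 memM memH memL memM) memM (upd1 M H L M M) (hq2.trans hc1.symm)
  -- SP at e for agent 2 (deviation to L)
  have hI := hbp ![M,M,M,M] (dom4 memM memM memM memM) 2 2 L memL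
  rw [upd2 M M M M L] at hI
  simp only [utility, hU, hq2, vec0, vec1, vec2, vec3] at hI
  -- SP at e for agent 1 (deviation to H)
  have hII := hbp ![M,M,M,M] (dom4 memM memM memM memM) 1 1 H memH
  rw [upd1 M M M M H] at hII
  simp only [utility, hU, hq1, vec0, vec1, vec2, vec3] at hII
  -- case split on the tie profile Z = (M,L,M,L)
  rcases hfeas ![M,L,M,L] (dom4 memM memL memM memL) with hZ | hZ
  · -- Z is upper
    have eqZ1 : ∀ k, p ![M,L,M,M] k = p ![M,L,M,L] k :=
      payEq hbp (dom4 memM memL memM memL) memM (upd3 M L M L M) (hm2.trans hZ.symm)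
    have eqZ2 : ∀ k, p ![M,M,M,M] k = p ![M,L,M,M] k :=
      payEq hbp (dom4 memM memL memM memM) memM (upd1 M L M M M) (hU.trans hm2.symm)
    have eqE1 : ∀ k, p ![H,M,M,L] k = p ![H,L,M,L] k :=
      payEq hbp (dom4 memH memL memM memL) memM (upd1 H L M L M) (hc2.trans hzh'.symm)
    have eqE2 : ∀ k, p ![H,M,M,M] k = p ![H,M,M,L] k :=
      payEq hbp (dom4 memH memM memM memL) memM (upd3 H M M L M) (hq0.trans hc2.symm)
    have eqE3 : ∀ k, p ![H,M,L,M] k = p ![H,M,M,M] k :=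
      payEq hbp (dom4 memH memM memM memM) memL (upd2 H M M M L) (hc3.trans hq0.symm)
    have eqE4 : ∀ k, p ![M,M,L,M] k = p ![H,M,L,M] k :=
      payEq hbp (dom4 memH memM memL memM) memM (upd0 H M L M M) (hq2.trans hc3.symm)
    -- bribe pair (0,3) at Z with agent 0 deviating to H
    have hIV := hbp ![M,L,M,L] (dom4 memM memL memM memL) 0 3 H memH
    rw [upd0 M L M L H] at hIV
    simp only [utility, hZ, hzh', vec0, vec1, vec2, vec3] at hIV
    -- case split on the tie profile R = (L,M,L,M)
    rcases hfeas ![L,M,L,M] (dom4 memL memM memL memM) with hR | hR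
    · -- R upper
      have eqF1 : ∀ k, p ![L,M,M,M] k = p ![L,M,L,M] k :=
        payEq hbp (dom4 memL memM memL memM) memM (upd2 L M L M M) (hP5.trans hR.symm)
      have eqF2 : ∀ k, p ![M,M,M,M] k = p ![L,M,M,M] k :=
        payEq hbp (dom4 memL memM memM memM) memM (upd0 L M M M M) (hU.trans hP5.symm)
      -- reverse bribe pair (0,3) at q2 with agent 0 deviating to L (flip to R)
      have hV := hbp ![M,M,L,M] (dom4 memM memM memL memM) 0 3 L memL
      rw [upd0 M M L M L] at hV
      simp only [utility, hq2, hR, vec0, vec1, vec2, vec3] at hV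
      linarith [hIV, hV, eqZ1 0, eqZ1 3, eqZ2 0, eqZ2 3, eqE1 0, eqE1 3, eqE2 0, eqE2 3,
        eqE3 0, eqE3 3, eqE4 0, eqE4 3, eqF1 0, eqF1 3, eqF2 0, eqF2 3]
    · -- R lower
      have eqG : ∀ k, p ![M,M,L,M] k = p ![L,M,L,M] k :=
        payEq hbp (dom4 memL memM memL memM) memM (upd0 L M L M M) (hq2.trans hR.symm)
      have eqH1 : ∀ k, p ![L,M,M,H] k = p ![L,M,L,H] k :=
        payEq hbp (dom4 memL memM memL memH) memM (upd2 L M L H M) (hc4.trans hu3.symm)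
      have eqH2 : ∀ k, p ![L,M,M,M] k = p ![L,M,M,H] k :=
        payEq hbp (dom4 memL memM memM memH) memM (upd3 L M M H M) (hP5.trans hc4.symm)
      have eqF2 : ∀ k, p ![M,M,M,M] k = p ![L,M,M,M] k :=
        payEq hbp (dom4 memL memM memM memM) memM (upd0 L M M M M) (hU.trans hP5.symm)
      -- SP at R for agent 3 (deviation to H, flips to upper)
      have hVI := hbp ![L,M,L,M] (dom4 memL memM memL memM) 3 3 H memH
      rw [upd3 L M L M H] at hVI
      simp only [utility, hR, hu3, vec0, vec1, vec2, vec3] at hVI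
      -- bribe pair (2,0) at R with agent 2 deviating to M (flips to upper)
      have hVII := hbp ![L,M,L,M] (dom4 memL memM memL memM) 2 0 M memM
      rw [upd2 L M L M M] at hVII
      simp only [utility, hR, hP5, vec0, vec1, vec2, vec3] at hVII
      linarith [hI, hIV, hVI, hVII, eqZ1 0, eqZ1 3, eqZ2 0, eqZ2 3, eqE1 0, eqE1 3,
        eqE2 0, eqE2 3, eqE3 0, eqE3 3, eqE4 0, eqE4 3, eqG 0, eqG 2, eqG 3,
        eqH1 3, eqH2 3, eqF2 0, eqF2 2, eqF2 3]
  · -- Z is lower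
    have eqB1 : ∀ k, p ![M,M,M,L] k = p ![M,L,M,L] k :=
      payEq hbp (dom4 memM memL memM memL) memM (upd1 M L M L M) (hq3.trans hZ.symm)
    have eqB2 : ∀ k, p ![M,M,L,L] k = p ![M,M,M,L] k :=
      payEq hbp (dom4 memM memM memM memL) memL (upd2 M M M L L) (hq4.trans hq3.symm)
    have eqB3 : ∀ k, p ![M,M,L,M] k = p ![M,M,L,L] k :=
      payEq hbp (dom4 memM memM memL memL) memM (upd3 M M L L M) (hq2.trans hq4.symm)
    have eqC1 : ∀ k, p ![M,L,H,M] k = p ![M,L,H,L] k :=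
      payEq hbp (dom4 memM memL memH memL) memM (upd3 M L H L M) (hm1.trans hzh.symm)
    have eqC2 : ∀ k, p ![M,L,M,M] k = p ![M,L,H,M] k :=
      payEq hbp (dom4 memM memL memH memM) memM (upd2 M L H M M) (hm2.trans hm1.symm)
    have eqC3 : ∀ k, p ![M,M,M,M] k = p ![M,L,M,M] k :=
      payEq hbp (dom4 memM memL memM memM) memM (upd1 M L M M M) (hU.trans hm2.symm)
    -- bribe pair (2,1) at Z with agent 2 deviating to H (flips to upper)
    have hIII := hbp ![M,L,M,L] (dom4 memM memL memM memL) 2 1 H memH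
    rw [upd2 M L M L H] at hIII
    simp only [utility, hZ, hzh, vec0, vec1, vec2, vec3] at hIII
    linarith [hI, hII, hIII, eqc1 1, eqc2 1, eqB1 1, eqB1 2, eqB2 1, eqB2 2, eqB3 1, eqB3 2,
      eqC1 1, eqC1 2, eqC2 1, eqC2 2, eqC3 1, eqC3 2]


private def sig : Fin 4 → Fin 4 := ![2, 3, 0, 1]

private lemma sig_sig : ∀ k, sig (sig k) = k := by decide

private def mir (F : (Fin 4 → ℝ) → Fin 4 → ℝ) : (Fin 4 → ℝ) → Fin 4 → ℝ :=
  fun θ k => F (θ ∘ sig) (sig k)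

private lemma comp_update (θ : Fin 4 → ℝ) (i : Fin 4) (x : ℝ) :
    (Function.update θ i x) ∘ sig = Function.update (θ ∘ sig) (sig i) x := by
  funext k
  by_cases h : k = sig i
  · subst h
    show Function.update θ i x (sig (sig i)) = _
    rw [sig_sig]
    simp [Function.update]
  · have h2 : sig k ≠ i := by
      intro hc
      exact h (by rw [← hc, sig_sig])
    show Function.update θ i x (sig k) = _
    rw [Function.update_of_ne h2, Function.update_of_ne h]
    rfl

private lemma flipU : ∀ k : Fin 4, (![1,1,0,0] : Fin 4 → ℝ) (sig k) = ![0,0,1,1] k := by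
  intro k; fin_cases k <;> rfl
private lemma flipD : ∀ k : Fin 4, (![0,0,1,1] : Fin 4 → ℝ) (sig k) = ![1,1,0,0] k := by
  intro k; fin_cases k <;> rfl


def Delta {n : ℕ} (A : (Fin n → ℝ) → Fin n → ℝ) (L H : ℝ) (θ : Fin n → ℝ) (i k : Fin n) : ℝ :=
  A (Function.update θ i L) k - A (Function.update θ i H) k

theorem stmt_8 (L M H : ℝ) (hLM : L < M) (hMH : M < H)
    (A p : (Fin 4 → ℝ) → Fin 4 → ℝ)
    (hfeas : ∀ θ, InDomain (fun _ => ({L, M, H} : Set ℝ)) θ →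
      A θ = (![1, 1, 0, 0] : Fin 4 → ℝ) ∨ A θ = (![0, 0, 1, 1] : Fin 4 → ℝ))
    (hupper : ∀ θ, InDomain (fun _ => ({L, M, H} : Set ℝ)) θ →
      θ 0 + θ 1 < θ 2 + θ 3 → A θ = (![1, 1, 0, 0] : Fin 4 → ℝ))
    (hlower : ∀ θ, InDomain (fun _ => ({L, M, H} : Set ℝ)) θ →
      θ 2 + θ 3 < θ 0 + θ 1 → A θ = (![0, 0, 1, 1] : Fin 4 → ℝ)) :
    ¬ Bribeproof (fun _ => ({L, M, H} : Set ℝ)) A p := by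
  intro hbp
  have memM : M ∈ ({L, M, H} : Set ℝ) := by simp
  have domE : InDomain (fun _ => ({L, M, H} : Set ℝ)) ![M, M, M, M] := by
    intro k; fin_cases k <;> exact memM
  have hdomσ : ∀ θ : Fin 4 → ℝ, InDomain (fun _ => ({L, M, H} : Set ℝ)) θ →
      InDomain (fun _ => ({L, M, H} : Set ℝ)) (θ ∘ sig) := fun θ h k => h (sig k)
  rcases hfeas ![M, M, M, M] domE with hU | hD
  · exact key L M H hLM hMH A p hfeas hupper hlower hbp hU
  · -- mirror everything
    have hfeas' : ∀ θ, InDomain (fun _ => ({L, M, H} : Set ℝ)) θ →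
        mir A θ = (![1, 1, 0, 0] : Fin 4 → ℝ) ∨ mir A θ = (![0, 0, 1, 1] : Fin 4 → ℝ) := by
      intro θ hθ
      rcases hfeas (θ ∘ sig) (hdomσ θ hθ) with h | h
      · right
        funext k
        show A (θ ∘ sig) (sig k) = _
        rw [h]; exact flipU k
      · left
        funext k
        show A (θ ∘ sig) (sig k) = _
        rw [h]; exact flipD k
    have hupper' : ∀ θ, InDomain (fun _ => ({L, M, H} : Set ℝ)) θ →
        θ 0 + θ 1 < θ 2 + θ 3 → mir A θ = (![1, 1, 0, 0] : Fin 4 → ℝ) := by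
      intro θ hθ hlt
      have h := hlower (θ ∘ sig) (hdomσ θ hθ) (show θ 0 + θ 1 < θ 2 + θ 3 from hlt)
      funext k
      show A (θ ∘ sig) (sig k) = _
      rw [h]; exact flipD k
    have hlower' : ∀ θ, InDomain (fun _ => ({L, M, H} : Set ℝ)) θ →
        θ 2 + θ 3 < θ 0 + θ 1 → mir A θ = (![0, 0, 1, 1] : Fin 4 → ℝ) := by
      intro θ hθ hlt
      have h := hupper (θ ∘ sig) (hdomσ θ hθ) (show θ 2 + θ 3 < θ 0 + θ 1 from hlt)
      funext k
      show A (θ ∘ sig) (sig k) = _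
      rw [h]; exact flipU k
    have hbp' : Bribeproof (fun _ => ({L, M, H} : Set ℝ)) (mir A) (mir p) := by
      intro θ hθ i j x hx
      have h := hbp (θ ∘ sig) (hdomσ θ hθ) (sig i) (sig j) x hx
      simp only [utility, mir] at h ⊢
      rw [comp_update]
      simp only [Function.comp_apply, sig_sig] at h
      exact h
    have hcomp : (![M, M, M, M] : Fin 4 → ℝ) ∘ sig = ![M, M, M, M] := by
      funext k; fin_cases k <;> rfl
    have hU' : mir A ![M, M, M, M] = (![1, 1, 0, 0] : Fin 4 → ℝ) := by
      funext k
      show A ((![M, M, M, M] : Fin 4 → ℝ) ∘ sig) (sig k) = _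
      rw [hcomp, hD]; exact flipD k
    exact key L M H hLM hMH (mir A) (mir p) hfeas' hupper' hlower' hbp' hU'
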